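/- For the Schwarzian KdV equation, with h₂ = u_{xx}²/(2u_x²), the variational derivative δh₂/δu satisfies E_p(u_t) = δh₂/δu when u_t = −(3/2)u_{xx}²/u_x + u_{xxx}, where E_p = (1/u_x)∂_x(1/u_x). Equivalently, u_t = u_x ∂_x^{-1}(u_x · δh₂/δu) reproduces the Schwarzian KdV flow. -/

import Mathlib

/-- for the Schwarzian KdV equation with `h₂ = u_{xx}²/(2u_x²)`,
the flow `u_t = −(3/2)u_{xx}²/u_x + u_{xxx}` satisfies `E_p(u_t) = δh₂/δu`,
where `E_p = (1/u_x)∂_x(1/u_x)` and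
`δh₂/δu = −∂_x(∂h₂/∂u_x) + ∂_x²(∂h₂/∂u_{xx}) = −∂_x(−u_{xx}²/u_x³) + ∂_x²(u_{xx}/u_x²)`. -/
theorem stmt12 (u : ℝ → ℝ) (hu : ContDiff ℝ (⊤ : ℕ∞) u) (hux : ∀ x, deriv u x ≠ 0) :
    ∀ x,
      (1 / deriv u x) *
        deriv (fun y => (1 / deriv u y) *
          (-(3/2 : ℝ) * (iteratedDeriv 2 u y) ^ 2 / deriv u y + iteratedDeriv 3 u y)) x
      = -deriv (fun y => -(iteratedDeriv 2 u y) ^ 2 / (deriv u y) ^ 3) x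
        + iteratedDeriv 2 (fun y => iteratedDeriv 2 u y / (deriv u y) ^ 2) x := by
  have hu' : ContDiff ℝ ((⊤ : ℕ∞) : WithTop ℕ∞) u := hu.of_le (by simp)
  have hd : ∀ (n : ℕ) (x : ℝ), HasDerivAt (iteratedDeriv n u) (iteratedDeriv (n+1) u x) x := by
    intro n x
    have h1 : ContDiff ℝ ((⊤ : ℕ∞) : WithTop ℕ∞) (iteratedDeriv n u) := by
      rw [iteratedDeriv_eq_iterate]; exact hu'.iterate_deriv n
    have := (h1.differentiable (by simp)).differentiableAt (x := x)
    rw [iteratedDeriv_succ]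
    exact this.hasDerivAt
  set d1 := iteratedDeriv 1 u with hd1def
  set d2 := iteratedDeriv 2 u
  set d3 := iteratedDeriv 3 u
  set d4 := iteratedDeriv 4 u
  have e1 : deriv u = d1 := iteratedDeriv_one.symm
  have hux1 : ∀ x, d1 x ≠ 0 := fun x => e1 ▸ hux x
  intro x
  simp only [e1]
  have hD1 : ∀ y, HasDerivAt d1 (d2 y) y := hd 1
  have hD2 : ∀ y, HasDerivAt d2 (d3 y) y := hd 2
  have hD3 : ∀ y, HasDerivAt d3 (d4 y) y := hd 3
  have hp2 : ∀ y, HasDerivAt (fun z => (d1 z)^2) (2 * d1 y * d2 y) y := by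
    intro y
    have := (hD1 y).fun_pow 2
    exact this.congr_deriv (by push_cast; ring)
  have hp3 : ∀ y, HasDerivAt (fun z => (d1 z)^3) (3 * (d1 y)^2 * d2 y) y := by
    intro y
    have := (hD1 y).fun_pow 3
    exact this.congr_deriv (by push_cast; ring)
  -- LHS inner derivative
  have hL : HasDerivAt (fun y => (1 / d1 y) *
      (-(3/2 : ℝ) * (d2 y) ^ 2 / d1 y + d3 y))
      (((0 * d1 x - 1 * d2 x) / (d1 x)^2) * (-(3/2 : ℝ) * (d2 x)^2 / d1 x + d3 x)
        + (1 / d1 x) * ((-(3/2 : ℝ) * (2 * d2 x * d3 x) * d1 x - (-(3/2:ℝ) * (d2 x)^2) * d2 x) / (d1 x)^2 + d4 x)) x := by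
    have hinv : HasDerivAt (fun z => 1 / d1 z) ((0 * d1 x - 1 * d2 x) / (d1 x)^2) x :=
      (hasDerivAt_const x (1:ℝ)).div (hD1 x) (hux1 x)
    have h2 : HasDerivAt (fun z => -(3/2 : ℝ) * (d2 z) ^ 2)
        (-(3/2 : ℝ) * (2 * d2 x * d3 x)) x := by
      have := ((hD2 x).fun_pow 2).const_mul (-(3/2:ℝ))
      exact this.congr_deriv (by push_cast; ring)
    have hnum := (h2.div (hD1 x) (hux1 x)).add (hD3 x)
    exact hinv.mul hnum
  rw [hL.deriv]
  -- RHS first term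
  have hn : HasDerivAt (fun y => -(d2 y) ^ 2) (-(2 * d2 x * d3 x)) x := by
    have := ((hD2 x).fun_pow 2).neg
    exact this.congr_deriv (by push_cast; ring)
  have hR1 := hn.fun_div (hp3 x) (pow_ne_zero 3 (hux1 x))
  rw [hR1.deriv]
  -- RHS second term : second derivative
  have hg : deriv (fun y => d2 y / (d1 y) ^ 2)
      = fun y => (d3 y * (d1 y)^2 - d2 y * (2 * d1 y * d2 y)) / ((d1 y)^2)^2 := by
    funext y
    exact ((hD2 y).div (hp2 y) (pow_ne_zero 2 (hux1 y))).deriv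
  have hgg : iteratedDeriv 2 (fun y => d2 y / (d1 y) ^ 2) x
      = deriv (fun y => (d3 y * (d1 y)^2 - d2 y * (2 * d1 y * d2 y)) / ((d1 y)^2)^2) x := by
    rw [iteratedDeriv_succ, iteratedDeriv_one, hg]
  rw [hgg]
  have hnum2 : HasDerivAt (fun y => d3 y * (d1 y)^2 - d2 y * (2 * d1 y * d2 y))
      ((d4 x * (d1 x)^2 + d3 x * (2 * d1 x * d2 x))
        - (d3 x * (2 * d1 x * d2 x) + d2 x * (2 * (d2 x * d2 x + d1 x * d3 x)))) x := by
    have ha := (hD3 x).mul (hp2 x)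
    have hin : HasDerivAt (fun y => 2 * d1 y * d2 y) (2 * (d2 x * d2 x + d1 x * d3 x)) x := by
      have := ((hD1 x).mul (hD2 x)).const_mul (2:ℝ)
      exact (this.congr_deriv (by ring)).congr_of_eventuallyEq (Filter.Eventually.of_forall fun y => by simp only [Pi.mul_apply]; ring)
    exact ha.sub ((hD2 x).mul hin)
  have hden2 : HasDerivAt (fun y => ((d1 y)^2)^2) (2 * ((d1 x)^2) * (2 * d1 x * d2 x)) x := by
    have := (hp2 x).fun_pow 2
    exact this.congr_deriv (by push_cast; ring)
  have hR2 := hnum2.fun_div hden2 (pow_ne_zero 2 (pow_ne_zero 2 (hux1 x)))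
  rw [hR2.deriv]
  have h0 := hux1 x
  field_simp
  ring
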